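/- Let T be a tree in the class 𝕋 (every non-pendant vertex of T is adjacent to at least one pendant vertex, and T has at least one non-pendant vertex). Then no non-pendant edge of T belongs to any maximum matching of T. -/

import Mathlib

open SimpleGraph

/-- `X` is the group inverse of `A`. -/
def IsGroupInverse {n : Type*} [Fintype n] (A X : Matrix n n ℝ) : Prop :=
  A * X * A = A ∧ X * A * X = X ∧ A * X = X * A

/-- A matching of a graph: a set of pairwise non-incident edges. -/
def IsMatching {V : Type*} (G : SimpleGraph V) (M : Finset (Sym2 V)) : Prop :=
  (↑M : Set (Sym2 V)) ⊆ G.edgeSet ∧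
    ∀ e ∈ M, ∀ f ∈ M, e ≠ f → ∀ v : V, ¬(v ∈ e ∧ v ∈ f)

/-- A maximum matching: a matching of maximum cardinality. -/
def IsMaxMatching {V : Type*} (G : SimpleGraph V) (M : Finset (Sym2 V)) : Prop :=
  IsMatching G M ∧ ∀ N : Finset (Sym2 V), IsMatching G N → N.card ≤ M.card

/-- A nonempty list of edges alternately in and out of `M`,
beginning and ending with edges of `M`. -/
def IsAltEdgeList {V : Type*} (M : Set (Sym2 V)) : List (Sym2 V) → Prop
  | [] => False
  | [e] => e ∈ M
  | e :: f :: rest => e ∈ M ∧ f ∉ M ∧ IsAltEdgeList M rest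

/-- A pair of vertices is maximally matchable if they are joined by a path that is
alternating with respect to some maximum matching. -/
def MaxMatchable {V : Type*} (G : SimpleGraph V) (u v : V) : Prop :=
  ∃ (p : G.Walk u v) (M : Finset (Sym2 V)),
    p.IsPath ∧ IsMaxMatching G M ∧ IsAltEdgeList (↑M) p.edges

/-- `G` is a star: some center `c` is adjacent to exactly the other vertices,
and there are no other edges. -/
def IsStar {V : Type*} (G : SimpleGraph V) : Prop :=
  ∃ c : V, ∀ u v : V, G.Adj u v ↔ ((u = c ∧ v ≠ c) ∨ (v = c ∧ u ≠ c))

/-- The class 𝕋: trees with at least one non-pendant vertex in which every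
non-pendant vertex is adjacent to a pendant vertex. -/
def InClassT {V : Type*} [Fintype V] (T : SimpleGraph V) [DecidableRel T.Adj] : Prop :=
  T.IsTree ∧ (∃ v, T.degree v ≠ 1) ∧
    ∀ v, T.degree v ≠ 1 → ∃ u, T.Adj v u ∧ T.degree u = 1

/-- The number of pendant neighbours of `v`. -/
def pendantNbrs {V : Type*} [Fintype V] [DecidableEq V] (T : SimpleGraph V)
    [DecidableRel T.Adj] (v : V) : ℕ :=
  ((T.neighborFinset v).filter fun u => T.degree u = 1).card

/-!
If an edge `uv` of a maximum matching had both ends non-pendant, pick pendant neighbours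
`p` of `u` and `q` of `v`. Their only neighbours are `u` and `v`, which are matched to each
other, so `p` and `q` are unmatched and `p - u - v - q` is an augmenting path: replacing `uv`
by `up` and `vq` gives a larger matching.
-/

section

variable {V : Type*}

lemma SimpleGraph.eq_of_degree_eq_one_of_adj_of_adj {G : SimpleGraph V} [Fintype V]
    [DecidableRel G.Adj] {w x y : V} (hw : G.degree w = 1) (hx : G.Adj w x) (hy : G.Adj w y) :
    x = y :=
  (degree_eq_one_iff_existsUnique_adj.mp hw).unique hx hy

namespace IsMatching

variable {G : SimpleGraph V} {M : Finset (Sym2 V)}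

lemma mono {N : Finset (Sym2 V)} (hM : IsMatching G M) (hNM : N ⊆ M) : IsMatching G N :=
  ⟨(Finset.coe_subset.mpr hNM).trans hM.1, fun e he f hf => hM.2 e (hNM he) f (hNM hf)⟩

lemma notMem_of_mem_erase [DecidableEq V] (hM : IsMatching G M) {e f : Sym2 V} {w : V}
    (he : e ∈ M) (hw : w ∈ e) (hf : f ∈ M.erase e) : w ∉ f := fun hwf =>
  hM.2 f (Finset.mem_of_mem_erase hf) e he (Finset.ne_of_mem_erase hf) w ⟨hwf, hw⟩

lemma insert [DecidableEq V] (hM : IsMatching G M) {a b : V} (hab : G.Adj a b)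
    (ha : ∀ f ∈ M, a ∉ f) (hb : ∀ f ∈ M, b ∉ f) : IsMatching G (insert s(a, b) M) := by
  have hfree : ∀ f ∈ M, ∀ w, w ∈ s(a, b) → w ∉ f := by
    intro f hf w hw
    rcases Sym2.mem_iff.mp hw with rfl | rfl
    exacts [ha f hf, hb f hf]
  refine ⟨?_, ?_⟩
  · rw [Finset.coe_insert]
    exact Set.insert_subset hab hM.1
  · intro e he f hf hef w ⟨hwe, hwf⟩
    rcases Finset.mem_insert.mp he with rfl | he <;> rcases Finset.mem_insert.mp hf with rfl | hf
    · exact hef rfl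
    · exact hfree f hf w hwe hwf
    · exact hfree e he w hwf hwe
    · exact hM.2 e he f hf hef w ⟨hwe, hwf⟩

lemma pendant_unmatched [Fintype V] [DecidableRel G.Adj] (hM : IsMatching G M) {u v p : V}
    (huv : s(u, v) ∈ M) (hp : G.degree p = 1) (hpu : G.Adj p u) (hpv : p ≠ v) :
    ∀ f ∈ M, p ∉ f := by
  intro f hf hpf
  obtain ⟨x, rfl⟩ := Sym2.mem_iff_exists.mp hpf
  have hxu : x = u := G.eq_of_degree_eq_one_of_adj_of_adj hp (hM.1 hf) hpu
  subst hxu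
  have hne : s(p, x) ≠ s(x, v) := fun h => by
    have : p ∈ s(x, v) := h ▸ Sym2.mem_mk_left p x
    rcases Sym2.mem_iff.mp this with h' | h'
    exacts [hpu.ne h', hpv h']
  exact hM.2 _ hf _ huv hne x ⟨Sym2.mem_mk_right p x, Sym2.mem_mk_left x v⟩

end IsMatching

lemma IsMaxMatching.not_augmenting_path_three [DecidableEq V] {G : SimpleGraph V}
    {M : Finset (Sym2 V)} (hM : IsMaxMatching G M) {u v p q : V} (huv : s(u, v) ∈ M)
    (hup : G.Adj u p) (hvq : G.Adj v q) (hpq : p ≠ q)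
    (hp : ∀ f ∈ M, p ∉ f) (hq : ∀ f ∈ M, q ∉ f) : False := by
  set M' := M.erase s(u, v)
  have hM' : IsMatching G M' := hM.1.mono (Finset.erase_subset _ _)
  have hp' : ∀ f ∈ M', p ∉ f := fun f hf => hp f (Finset.mem_of_mem_erase hf)
  have hq' : ∀ f ∈ M', q ∉ f := fun f hf => hq f (Finset.mem_of_mem_erase hf)
  have hu' : ∀ f ∈ M', u ∉ f := fun f => hM.1.notMem_of_mem_erase huv (Sym2.mem_mk_left u v)
  have hv' : ∀ f ∈ M', v ∉ f := fun f => hM.1.notMem_of_mem_erase huv (Sym2.mem_mk_right u v)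
  have hvp : v ≠ p := fun h => hp _ huv (h ▸ Sym2.mem_mk_right u v)
  have hqu : q ≠ u := fun h => hq _ huv (h ▸ Sym2.mem_mk_left u v)
  set M₁ := insert s(u, p) M'
  have hM₁ : IsMatching G M₁ := hM'.insert hup hu' hp'
  have hv₁ : ∀ f ∈ M₁, v ∉ f := Finset.forall_mem_insert _ _ _ |>.mpr
    ⟨by simp [(hM.1.1 huv).ne.symm, hvp], hv'⟩
  have hq₁ : ∀ f ∈ M₁, q ∉ f := Finset.forall_mem_insert _ _ _ |>.mpr
    ⟨by simp [hqu, hpq.symm], hq'⟩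
  set N := insert s(v, q) M₁
  have hN : IsMatching G N := hM₁.insert hvq hv₁ hq₁
  have hcard : N.card = M.card + 1 := by
    rw [Finset.card_insert_of_notMem fun h => hv₁ _ h (Sym2.mem_mk_left v q),
      Finset.card_insert_of_notMem fun h => hp' _ h (Sym2.mem_mk_right u p),
      ← Finset.card_erase_add_one huv]
  have := hM.2 N hN
  omega

end

/-- In a tree of class 𝕋, no non-pendant edge belongs to any maximum
matching, i.e. every edge of a maximum matching is a pendant edge. -/
theorem classT_matching_edges_pendant {V : Type*} [Fintype V]
    (T : SimpleGraph V) [DecidableRel T.Adj] (hT : InClassT T) :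
    ∀ M : Finset (Sym2 V), IsMaxMatching T M →
      ∀ e ∈ M, ∃ v ∈ e, T.degree v = 1 := by
  classical
  obtain ⟨-, -, hpendant⟩ := hT
  intro M hM e he
  induction e using Sym2.ind with
  | _ u v =>
  by_contra! hcon
  have hu : T.degree u ≠ 1 := hcon u (Sym2.mem_mk_left u v)
  have hv : T.degree v ≠ 1 := hcon v (Sym2.mem_mk_right u v)
  obtain ⟨p, hup, hp⟩ := hpendant u hu
  obtain ⟨q, hvq, hq⟩ := hpendant v hv
  have hpq : p ≠ q := by
    rintro rfl
    exact (hM.1.1 he).ne (T.eq_of_degree_eq_one_of_adj_of_adj hp hup.symm hvq.symm)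
  have hvu : s(v, u) ∈ M := Sym2.eq_swap ▸ he
  exact hM.not_augmenting_path_three he hup hvq hpq
    (hM.1.pendant_unmatched he hp hup.symm fun h => hv (h ▸ hp))
    (hM.1.pendant_unmatched hvu hq hvq.symm fun h => hu (h ▸ hq))
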